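/- Let k ≥ 1 and α₁,…,α_k : Fˣ → ℂˣ characters. If n = n₁ + n₂ and x₁ ∈ GL_{n₁}(F), x₂ ∈ GL_{n₂}(F) have no common eigenvalues over an algebraic closure of F (equivalently, their characteristic polynomials are coprime in F[X]), then K(α,ψ,diag(x₁,x₂)) = q^{(k-1)n₁n₂} · K(α,ψ,x₁) · K(α,ψ,x₂), where diag(x₁,x₂) ∈ GL_n(F) is the block diagonal matrix with blocks x₁ and x₂. -/
import Mathlib

open scoped BigOperators

/-- The twisted matrix Kloosterman sum
`K(α,ψ,x) = Σ_{g₁⋯g_k = x} (∏ αᵢ(det gᵢ)) ψ(tr(g₁+⋯+g_k))`. -/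
noncomputable def matrixKloosterman {F : Type} [Field F] [Fintype F] [DecidableEq F]
    {ι : Type} [Fintype ι] [DecidableEq ι] {k : ℕ}
    (α : Fin k → Fˣ →* ℂˣ) (ψ : AddChar F ℂ) (x : Matrix ι ι F) : ℂ :=
  ∑ g : Fin k → (Matrix ι ι F)ˣ,
    if ((List.ofFn g).prod : Matrix ι ι F) = x then
      (∏ i, (α i (Units.map (Matrix.detMonoidHom) (g i)) : ℂ)) *
        ψ (Matrix.trace (∑ i, ((g i : Matrix ι ι F))))
    else 0

namespace MKHelp

open Matrix Finset

set_option linter.unusedSectionVars false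

variable {F : Type} [Field F] [Fintype F] [DecidableEq F]

/-- `α (det M)` extended by zero to non-invertible matrices. -/
noncomputable def Adet {ι : Type} [Fintype ι] [DecidableEq ι]
    (a : Fˣ →* ℂˣ) (M : Matrix ι ι F) : ℂ :=
  if h : IsUnit M.det then (a h.unit : ℂ) else 0

lemma Adet_eq_of_det_eq {ι : Type} [Fintype ι] [DecidableEq ι]
    (a : Fˣ →* ℂˣ) {M N : Matrix ι ι F} (h : M.det = N.det) :
    Adet a M = Adet a N := by
  unfold Adet; rw [h]

lemma Adet_units {ι : Type} [Fintype ι] [DecidableEq ι]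
    (a : Fˣ →* ℂˣ) (u : (Matrix ι ι F)ˣ) :
    Adet a (u : Matrix ι ι F) = (a (Units.map (Matrix.detMonoidHom) u) : ℂ) := by
  have h : IsUnit ((u : Matrix ι ι F)).det :=
    (Matrix.isUnit_iff_isUnit_det _).mp u.isUnit
  rw [Adet, dif_pos h]
  have h2 : h.unit = Units.map (Matrix.detMonoidHom) u := by
    refine Units.ext ?_
    rw [h.unit_spec, Units.coe_map]
    simp [Matrix.coe_detMonoidHom]
  rw [h2]

/-- The matrix-level Kloosterman sum. -/
noncomputable def KS {ι : Type} [Fintype ι] [DecidableEq ι] {k : ℕ}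
    (α : Fin k → Fˣ →* ℂˣ) (ψ : AddChar F ℂ) (x : Matrix ι ι F) : ℂ :=
  ∑ m : Fin k → Matrix ι ι F,
    if (List.ofFn m).prod = x then
      (∏ i, Adet (α i) (m i)) * ψ (Matrix.trace (∑ i, m i))
    else 0

lemma isUnit_of_mem_prod {ι : Type} [Fintype ι] [DecidableEq ι] :
    ∀ (l : List (Matrix ι ι F)), IsUnit l.prod → ∀ A ∈ l, IsUnit A := by
  intro l
  induction l with
  | nil => intro _ A hA; simp at hA
  | cons B t ih =>
    intro h A hA
    rw [List.prod_cons] at h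
    rw [Matrix.isUnit_iff_isUnit_det, Matrix.det_mul, IsUnit.mul_iff] at h
    rcases List.mem_cons.mp hA with rfl | hA
    · exact (Matrix.isUnit_iff_isUnit_det A).mpr h.1
    · exact ih ((Matrix.isUnit_iff_isUnit_det _).mpr h.2) A hA

lemma KS_eq {ι : Type} [Fintype ι] [DecidableEq ι] {k : ℕ}
    (α : Fin k → Fˣ →* ℂˣ) (ψ : AddChar F ℂ) {x : Matrix ι ι F} (hx : IsUnit x) :
    KS α ψ x = matrixKloosterman α ψ x := by
  classical
  rw [KS, matrixKloosterman]
  set T : (Fin k → Matrix ι ι F) → ℂ := fun m =>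
    if (List.ofFn m).prod = x then
      (∏ i, Adet (α i) (m i)) * ψ (Matrix.trace (∑ i, m i))
    else 0 with hT
  have hco : ∀ g : Fin k → (Matrix ι ι F)ˣ,
      (List.ofFn (fun i => ((g i : Matrix ι ι F)))).prod
        = ((List.ofFn g).prod : Matrix ι ι F) := by
    intro g
    rw [show (fun i => ((g i : Matrix ι ι F))) = (Units.coeHom (Matrix ι ι F)) ∘ g from rfl,
      ← List.map_ofFn, ← MonoidHom.map_list_prod]
    rfl
  have h1 : ∑ m ∈ (Finset.univ.image (fun (g : Fin k → (Matrix ι ι F)ˣ) =>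
        fun i => ((g i : Matrix ι ι F)))), T m
      = ∑ g : Fin k → (Matrix ι ι F)ˣ, T (fun i => ((g i : Matrix ι ι F))) := by
    refine Finset.sum_image ?_
    intro g _ g' _ h
    funext i
    exact Units.ext (congrFun h i)
  have h2 : ∑ m : Fin k → Matrix ι ι F, T m
      = ∑ m ∈ (Finset.univ.image (fun (g : Fin k → (Matrix ι ι F)ˣ) =>
        fun i => ((g i : Matrix ι ι F)))), T m := by
    refine (Finset.sum_subset (Finset.subset_univ _) ?_).symm
    intro m _ hm
    rw [hT]
    simp only
    rw [if_neg]
    intro hprod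
    apply hm
    have hun : ∀ i, IsUnit (m i) := by
      intro i
      refine isUnit_of_mem_prod _ (by rw [hprod]; exact hx) (m i) ?_
      rw [List.mem_ofFn]; exact ⟨i, rfl⟩
    refine Finset.mem_image.mpr ⟨fun i => (hun i).unit, Finset.mem_univ _, ?_⟩
    funext i; exact (hun i).unit_spec
  rw [h2, h1]
  refine Finset.sum_congr rfl fun g _ => ?_
  rw [hT]
  simp only
  rw [hco g]
  refine if_congr Iff.rfl ?_ rfl
  congr 1
  exact Finset.prod_congr rfl fun i _ => Adet_units (α i) (g i)

/-- Conjugation invariance of `KS`. -/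
lemma KS_conj {ι : Type} [Fintype ι] [DecidableEq ι] {k : ℕ}
    (α : Fin k → Fˣ →* ℂˣ) (ψ : AddChar F ℂ) (u : (Matrix ι ι F)ˣ) (x : Matrix ι ι F) :
    KS α ψ ((u : Matrix ι ι F) * x * ((u⁻¹ : (Matrix ι ι F)ˣ) : Matrix ι ι F))
      = KS α ψ x := by
  classical
  rw [KS, KS]
  have hbij : Function.Bijective (fun (m : Fin k → Matrix ι ι F) =>
      (fun i => (u : Matrix ι ι F) * m i * ((u⁻¹ : (Matrix ι ι F)ˣ) : Matrix ι ι F))) := by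
    rw [Function.bijective_iff_has_inverse]
    refine ⟨fun m i => ((u⁻¹ : (Matrix ι ι F)ˣ) : Matrix ι ι F) * m i * (u : Matrix ι ι F),
      fun m => funext fun i => ?_, fun m => funext fun i => ?_⟩ <;>
    · simp only [mul_assoc, Units.inv_mul_cancel_left, Units.mul_inv_cancel_left,
        Units.inv_mul, Units.mul_inv, mul_one]
  refine (Fintype.sum_bijective _ hbij _ _ fun m => ?_).symm
  have hprod : (List.ofFn (fun i => (u : Matrix ι ι F) * m i
      * ((u⁻¹ : (Matrix ι ι F)ˣ) : Matrix ι ι F))).prod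
      = (u : Matrix ι ι F) * (List.ofFn m).prod * ((u⁻¹ : _ˣ) : Matrix ι ι F) := by
    let c : (Matrix ι ι F) →* (Matrix ι ι F) :=
      { toFun := fun X => (u : Matrix ι ι F) * X * ((u⁻¹ : (Matrix ι ι F)ˣ) : Matrix ι ι F)
        map_one' := by show (u : Matrix ι ι F) * 1 * _ = 1; rw [mul_one, Units.mul_inv]
        map_mul' := by
          intro a b
          simp only [mul_assoc, Units.inv_mul_cancel_left] }
    have : (fun i => (u : Matrix ι ι F) * m i * ((u⁻¹ : (Matrix ι ι F)ˣ) : Matrix ι ι F))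
        = c ∘ m := rfl
    rw [this, ← List.map_ofFn, ← MonoidHom.map_list_prod]
    rfl
  have hcond : ((List.ofFn (fun i => (u : Matrix ι ι F) * m i
      * ((u⁻¹ : (Matrix ι ι F)ˣ) : Matrix ι ι F))).prod
      = (u : Matrix ι ι F) * x * ((u⁻¹ : _ˣ) : Matrix ι ι F)) ↔ (List.ofFn m).prod = x := by
    rw [hprod, mul_assoc, mul_assoc, Units.mul_right_inj, Units.mul_left_inj]
  rw [if_congr hcond rfl rfl]
  refine if_congr Iff.rfl ?_ rfl
  congr 1
  · refine Finset.prod_congr rfl fun i _ => ?_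
    refine (Adet_eq_of_det_eq _ ?_).symm
    rw [Matrix.det_mul, Matrix.det_mul]
    have h1 : (u : Matrix ι ι F).det * ((u⁻¹ : _ˣ) : Matrix ι ι F).det = 1 := by
      rw [← Matrix.det_mul, Units.mul_inv, Matrix.det_one]
    calc (u : Matrix ι ι F).det * (m i).det * ((u⁻¹ : _ˣ) : Matrix ι ι F).det
        = (m i).det * ((u : Matrix ι ι F).det * ((u⁻¹ : _ˣ) : Matrix ι ι F).det) := by ring
      _ = (m i).det := by rw [h1, mul_one]
  · congr 1
    have : ∑ i, (u : Matrix ι ι F) * m i * ((u⁻¹ : _ˣ) : Matrix ι ι F)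
        = (u : Matrix ι ι F) * (∑ i, m i) * ((u⁻¹ : _ˣ) : Matrix ι ι F) := by
      rw [← Finset.sum_mul, ← Finset.mul_sum]
    rw [this, Matrix.trace_units_conj]

section Blocks

variable {p q : Type} [Fintype p] [DecidableEq p] [Fintype q] [DecidableEq q]

/-- Block upper unipotent matrix. -/
def up (b : Matrix p q F) : Matrix (p ⊕ q) (p ⊕ q) F := Matrix.fromBlocks 1 b 0 1

lemma up_mul_up (b b' : Matrix p q F) : (up b) * (up b') = up (b + b') := by
  rw [up, up, up, Matrix.fromBlocks_multiply]
  simp [add_comm]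

lemma up_zero : up (0 : Matrix p q F) = 1 := by
  rw [up, Matrix.fromBlocks_one]

lemma up_mul_neg (b : Matrix p q F) : up b * up (-b) = 1 := by
  rw [up_mul_up, add_neg_cancel, up_zero]

lemma up_neg_mul (b : Matrix p q F) : up (-b) * up b = 1 := by
  rw [up_mul_up, neg_add_cancel, up_zero]

lemma det_up (b : Matrix p q F) : (up b).det = 1 := by
  rw [up, Matrix.det_fromBlocks_zero₂₁, Matrix.det_one, Matrix.det_one, one_mul]

lemma trace_fromBlocks' (A : Matrix p p F) (B : Matrix p q F) (C : Matrix q p F)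
    (D : Matrix q q F) :
    Matrix.trace (Matrix.fromBlocks A B C D) = Matrix.trace A + Matrix.trace D := by
  simp [Matrix.trace, Matrix.diag, Fintype.sum_sum_type]

lemma up_mul (c : Matrix p q F) (X : Matrix (p ⊕ q) (p ⊕ q) F) :
    up c * X = Matrix.fromBlocks (X.toBlocks₁₁ + c * X.toBlocks₂₁)
      (X.toBlocks₁₂ + c * X.toBlocks₂₂) (X.toBlocks₂₁) (X.toBlocks₂₂) := by
  conv_lhs => rw [← Matrix.fromBlocks_toBlocks X]
  rw [up, Matrix.fromBlocks_multiply]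
  simp

lemma mul_up (X : Matrix (p ⊕ q) (p ⊕ q) F) (c : Matrix p q F) :
    X * up c = Matrix.fromBlocks (X.toBlocks₁₁) (X.toBlocks₁₁ * c + X.toBlocks₁₂)
      (X.toBlocks₂₁) (X.toBlocks₂₁ * c + X.toBlocks₂₂) := by
  conv_lhs => rw [← Matrix.fromBlocks_toBlocks X]
  rw [up, Matrix.fromBlocks_multiply]
  simp

lemma trace_up_conj (c c' : Matrix p q F) (X : Matrix (p ⊕ q) (p ⊕ q) F) :
    Matrix.trace (up c * X * up c')
      = Matrix.trace X
        + (Matrix.trace (c * X.toBlocks₂₁) + Matrix.trace (X.toBlocks₂₁ * c')) := by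
  rw [up_mul, mul_up]
  simp only [Matrix.toBlocks_fromBlocks₁₁, Matrix.toBlocks_fromBlocks₁₂,
    Matrix.toBlocks_fromBlocks₂₁, Matrix.toBlocks_fromBlocks₂₂]
  rw [trace_fromBlocks']
  have hX : Matrix.trace X = Matrix.trace X.toBlocks₁₁ + Matrix.trace X.toBlocks₂₂ := by
    conv_lhs => rw [← Matrix.fromBlocks_toBlocks X]
    rw [trace_fromBlocks']
  rw [hX, Matrix.trace_add, Matrix.trace_add]
  ring

/-- The target condition on the product matrix. -/
def Cnd (y₁ : Matrix p p F) (y₂ : Matrix q q F) (X : Matrix (p ⊕ q) (p ⊕ q) F) : Prop :=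
  X.toBlocks₁₁ = y₁ ∧ X.toBlocks₂₁ = 0 ∧ X.toBlocks₂₂ = y₂

instance (y₁ : Matrix p p F) (y₂ : Matrix q q F) (X : Matrix (p ⊕ q) (p ⊕ q) F) :
    Decidable (Cnd y₁ y₂ X) := by unfold Cnd; infer_instance

lemma Cnd_up_left (y₁ : Matrix p p F) (y₂ : Matrix q q F) (c : Matrix p q F)
    (X : Matrix (p ⊕ q) (p ⊕ q) F) :
    Cnd y₁ y₂ (up c * X) ↔ Cnd y₁ y₂ X := by
  rw [up_mul]
  unfold Cnd
  simp only [Matrix.toBlocks_fromBlocks₁₁, Matrix.toBlocks_fromBlocks₂₁,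
    Matrix.toBlocks_fromBlocks₂₂]
  constructor
  · rintro ⟨h1, h2, h3⟩
    simp only [h2, Matrix.mul_zero, Matrix.zero_mul, add_zero, zero_add] at h1 h3
    exact ⟨h1, h2, h3⟩
  · rintro ⟨h1, h2, h3⟩
    simp only [h2, Matrix.mul_zero, Matrix.zero_mul, add_zero, zero_add]
    exact ⟨h1, by trivial, h3⟩

lemma Cnd_up_right (y₁ : Matrix p p F) (y₂ : Matrix q q F) (c : Matrix p q F)
    (X : Matrix (p ⊕ q) (p ⊕ q) F) :
    Cnd y₁ y₂ (X * up c) ↔ Cnd y₁ y₂ X := by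
  rw [mul_up]
  unfold Cnd
  simp only [Matrix.toBlocks_fromBlocks₁₁, Matrix.toBlocks_fromBlocks₂₁,
    Matrix.toBlocks_fromBlocks₂₂]
  constructor
  · rintro ⟨h1, h2, h3⟩
    simp only [h2, Matrix.mul_zero, Matrix.zero_mul, add_zero, zero_add] at h1 h3
    exact ⟨h1, h2, h3⟩
  · rintro ⟨h1, h2, h3⟩
    simp only [h2, Matrix.mul_zero, Matrix.zero_mul, add_zero, zero_add]
    exact ⟨h1, by trivial, h3⟩

end Blocks

section Telescope

lemma prod_ofFn_conj {M : Type} [Monoid M] :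
    ∀ {k : ℕ} (m : Fin k → M) (u u' : Fin (k + 1) → M),
      (∀ j, u j * u' j = 1) → (∀ j, u' j * u j = 1) →
      (List.ofFn (fun i => u i.castSucc * m i * u' i.succ)).prod
        = u 0 * (List.ofFn m).prod * u' (Fin.last k) := by
  intro k
  induction k with
  | zero =>
    intro m u u' h h'
    have e1 : (List.ofFn (fun i : Fin 0 => u i.castSucc * m i * u' i.succ)) = [] := rfl
    have e2 : (List.ofFn m) = [] := rfl
    rw [e1, e2]
    simp only [List.prod_nil, mul_one]
    exact (h 0).symm
  | succ n ih =>
    intro m u u' h h'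
    rw [List.ofFn_succ, List.prod_cons, List.ofFn_succ (f := m), List.prod_cons]
    have hrest : (List.ofFn fun i : Fin n =>
        u (i.succ).castSucc * m i.succ * u' (i.succ).succ).prod
        = u (0 : Fin (n+1)).succ * (List.ofFn fun i : Fin n => m i.succ).prod
          * u' (Fin.last n).succ := by
      have hfe : (fun i : Fin n => u (i.succ).castSucc * m i.succ * u' (i.succ).succ)
          = (fun i : Fin n => u (i.castSucc).succ * m i.succ * u' (i.succ).succ) :=
        funext fun i => by rw [Fin.succ_castSucc]
      rw [hfe]
      exact ih (fun i => m i.succ) (fun j => u j.succ) (fun j => u' j.succ)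
        (fun j => h j.succ) (fun j => h' j.succ)
    rw [hrest, Fin.succ_last]
    have h0 : (0 : Fin (n + 1 + 1)) = (0 : Fin (n+1)).castSucc := rfl
    have hcancel : u' (0 : Fin (n+1)).succ * u (0 : Fin (n+1)).succ = 1 := h' _
    have hc0 : (0 : Fin (n+1)).castSucc = (0 : Fin (n+2)) := rfl
    calc u (0 : Fin (n+1)).castSucc * m 0 * u' (0 : Fin (n+1)).succ
          * (u (0 : Fin (n+1)).succ * (List.ofFn fun i : Fin n => m i.succ).prod
            * u' (Fin.last (n+1)))
        = u (0 : Fin (n+1)).castSucc * (m 0 * ((u' (0 : Fin (n+1)).succ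
            * u (0 : Fin (n+1)).succ) * (List.ofFn fun i : Fin n => m i.succ).prod))
          * u' (Fin.last (n+1)) := by
          simp only [mul_assoc]
      _ = u 0 * (m 0 * (List.ofFn fun i : Fin n => m i.succ).prod) * u' (Fin.last (n+1)) := by
          rw [hcancel, one_mul, hc0]

end Telescope

section CharSum

lemma AddChar.map_finset_sum' {γ : Type} (ψ : AddChar F ℂ) (s : Finset γ) (f : γ → F) :
    ψ (∑ i ∈ s, f i) = ∏ i ∈ s, ψ (f i) := by
  classical
  induction s using Finset.cons_induction with
  | empty => simp
  | cons a s ha ih => rw [Finset.sum_cons, Finset.prod_cons, AddChar.map_add_eq_mul, ih]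

lemma sum_fn_prod {γ δ : Type} [Fintype γ] [DecidableEq γ] [Fintype δ] (f : γ → δ → ℂ) :
    ∑ g : γ → δ, ∏ i, f i (g i) = ∏ i, ∑ t, f i t := by
  rw [← Finset.sum_prod_piFinset Finset.univ f, Fintype.piFinset_univ]

lemma prod_ite_all {γ : Type} [Fintype γ] (P : γ → Prop) [DecidablePred P] (c : ℂ) :
    (∏ j, if P j then c else 0) = if (∀ j, P j) then c ^ (Fintype.card γ) else 0 := by
  by_cases h : ∀ j, P j
  · rw [if_pos h, Finset.prod_congr rfl (fun j _ => if_pos (h j)), Finset.prod_const,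
      Finset.card_univ]
  · rw [if_neg h]
    push_neg at h
    obtain ⟨j, hj⟩ := h
    exact Finset.prod_eq_zero (Finset.mem_univ j) (if_neg hj)

variable {p q : Type} [Fintype p] [DecidableEq p] [Fintype q] [DecidableEq q]

set_option maxHeartbeats 1000000 in
lemma sum_psi_trace_mul {ψ : AddChar F ℂ} (hψ : ψ.IsPrimitive) (Mx : Matrix q p F) :
    ∑ β : Matrix p q F, ψ (Matrix.trace (β * Mx))
      = if Mx = 0 then ((Fintype.card F : ℂ) ^ (Fintype.card p * Fintype.card q)) else 0 := by
  classical
  have h1 : ∀ β : Matrix p q F, Matrix.trace (β * Mx) = ∑ i : p, ∑ j : q, β i j * Mx j i := by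
    intro β
    simp [Matrix.trace, Matrix.diag, Matrix.mul_apply]
  have h2 : ∀ β : Matrix p q F, ψ (Matrix.trace (β * Mx))
      = ∏ i : p, ∏ j : q, ψ (β i j * Mx j i) := by
    intro β
    rw [h1, AddChar.map_finset_sum']
    exact Finset.prod_congr rfl fun i _ => AddChar.map_finset_sum' ψ _ _
  simp only [h2]
  rw [← Equiv.sum_comp (Matrix.of : (p → q → F) ≃ Matrix p q F)]
  simp only [Matrix.of_apply]
  rw [sum_fn_prod (fun i (r : q → F) => ∏ j : q, ψ (r j * Mx j i))]
  have h3 : ∀ i : p, ∑ r : q → F, ∏ j : q, ψ (r j * Mx j i)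
      = ∏ j : q, ∑ t : F, ψ (t * Mx j i) := fun i =>
    sum_fn_prod (fun j t => ψ (t * Mx j i))
  simp only [h3]
  have h4 : ∀ i j, ∑ t : F, ψ (t * Mx j i)
      = if Mx j i = 0 then (Fintype.card F : ℂ) else 0 := by
    intro i j
    exact_mod_cast AddChar.sum_mulShift (Mx j i) hψ
  simp only [h4]
  by_cases h : Mx = 0
  · rw [if_pos h]
    subst h
    simp only [Matrix.zero_apply, eq_self_iff_true, if_true]
    rw [Finset.prod_const, Finset.prod_const, Finset.card_univ, Finset.card_univ, ← pow_mul,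
      mul_comm (Fintype.card q)]
  · rw [if_neg h]
    have : ∃ j i, Mx j i ≠ 0 := by
      by_contra hc
      push_neg at hc
      exact h (by funext j i; exact hc j i)
    obtain ⟨j, i, hji⟩ := this
    refine Finset.prod_eq_zero (Finset.mem_univ i) ?_
    exact Finset.prod_eq_zero (Finset.mem_univ j) (if_neg hji)

end CharSum

section Sylvester

variable {p q : Type} [Fintype p] [DecidableEq p] [Fintype q] [DecidableEq q]

lemma aeval_commute {A : Matrix p p F} {D : Matrix q q F} {b : Matrix p q F}
    (hb : A * b = b * D) (r : Polynomial F) :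
    (Polynomial.aeval A r) * b = b * (Polynomial.aeval D r) := by
  have hpow : ∀ n : ℕ, A ^ n * b = b * D ^ n := by
    intro n
    induction n with
    | zero => rw [pow_zero, pow_zero, Matrix.one_mul, Matrix.mul_one]
    | succ n ihn =>
      rw [pow_succ, pow_succ, Matrix.mul_assoc, hb, ← Matrix.mul_assoc, ihn,
        Matrix.mul_assoc]
  induction r using Polynomial.induction_on' with
  | add f g hf hg => rw [map_add, map_add, Matrix.add_mul, Matrix.mul_add, hf, hg]
  | monomial n a =>
    rw [Polynomial.aeval_monomial, Polynomial.aeval_monomial,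
      Algebra.algebraMap_eq_smul_one, Algebra.algebraMap_eq_smul_one]
    calc (a • (1 : Matrix p p F) * A ^ n) * b = a • (A ^ n * b) := by
          rw [Matrix.smul_mul, Matrix.one_mul, Matrix.smul_mul]
      _ = a • (b * D ^ n) := by rw [hpow n]
      _ = b * (a • (1 : Matrix q q F) * D ^ n) := by
          rw [Matrix.smul_mul, Matrix.one_mul, Matrix.mul_smul]

lemma sylvester_bijective {x₁ : Matrix p p F} {x₂ : Matrix q q F}
    (hcop : IsCoprime (Matrix.charpoly x₁) (Matrix.charpoly x₂)) :
    Function.Bijective (fun b : Matrix p q F => b * x₂ - x₁ * b) := by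
  let L : Matrix p q F →ₗ[F] Matrix p q F :=
    { toFun := fun b => b * x₂ - x₁ * b
      map_add' := by
        intro a b
        rw [Matrix.add_mul, Matrix.mul_add]
        abel
      map_smul' := by
        intro t a
        rw [RingHom.id_apply, Matrix.smul_mul, Matrix.mul_smul, smul_sub] }
  have hinj : Function.Injective L := by
    rw [← LinearMap.ker_eq_bot, LinearMap.ker_eq_bot']
    intro b hb
    have hb' : x₁ * b = b * x₂ := by
      have : b * x₂ - x₁ * b = 0 := hb
      rw [sub_eq_zero] at this
      rw [this]
    obtain ⟨uu, vv, huv⟩ := hcop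
    have h1 : (Polynomial.aeval x₁)
        (uu * Matrix.charpoly x₁ + vv * Matrix.charpoly x₂) = 1 := by
      rw [huv, _root_.map_one]
    calc b = ((Polynomial.aeval x₁)
          (uu * Matrix.charpoly x₁ + vv * Matrix.charpoly x₂)) * b := by
          rw [h1, Matrix.one_mul]
      _ = (Polynomial.aeval x₁) uu * ((Polynomial.aeval x₁) (Matrix.charpoly x₁) * b)
          + (Polynomial.aeval x₁) vv * ((Polynomial.aeval x₁) (Matrix.charpoly x₂) * b) := by
          rw [map_add, _root_.map_mul, _root_.map_mul, Matrix.add_mul, Matrix.mul_assoc, Matrix.mul_assoc]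
      _ = 0 := by
          rw [Matrix.aeval_self_charpoly, aeval_commute hb' (Matrix.charpoly x₂),
            Matrix.aeval_self_charpoly, Matrix.zero_mul, Matrix.mul_zero, Matrix.mul_zero,
            Matrix.mul_zero, add_zero]
  have hsurj : Function.Surjective L := LinearMap.injective_iff_surjective.mp hinj
  exact ⟨hinj, hsurj⟩

end Sylvester

section Gather

variable {p q : Type} [Fintype p] [DecidableEq p] [Fintype q] [DecidableEq q]
variable {k : ℕ} (α : Fin k → Fˣ →* ℂˣ) (ψ : AddChar F ℂ)
variable (y₁ : Matrix p p F) (y₂ : Matrix q q F)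

lemma eq_fromBlocks_iff (P : Matrix (p ⊕ q) (p ⊕ q) F) (B : Matrix p q F) :
    P = Matrix.fromBlocks y₁ B 0 y₂ ↔ (Cnd y₁ y₂ P ∧ P.toBlocks₁₂ = B) := by
  constructor
  · intro h
    subst h
    exact ⟨⟨rfl, rfl, rfl⟩, rfl⟩
  · rintro ⟨⟨h1, h2, h3⟩, h4⟩
    conv_lhs => rw [← Matrix.fromBlocks_toBlocks P]
    rw [h1, h2, h3, h4]

lemma gather :
    ∑ B : Matrix p q F, KS α ψ (Matrix.fromBlocks y₁ B 0 y₂)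
      = ∑ m : Fin k → Matrix (p ⊕ q) (p ⊕ q) F,
          if Cnd y₁ y₂ ((List.ofFn m).prod) then
            (∏ i, Adet (α i) (m i)) * ψ (Matrix.trace (∑ i, m i))
          else 0 := by
  classical
  unfold KS
  rw [Finset.sum_comm]
  refine Finset.sum_congr rfl fun m _ => ?_
  simp only [eq_fromBlocks_iff y₁ y₂ ((List.ofFn m).prod)]
  by_cases hC : Cnd y₁ y₂ ((List.ofFn m).prod)
  · simp only [hC, true_and, if_pos]
    rw [Finset.sum_ite_eq Finset.univ ((List.ofFn m).prod.toBlocks₁₂)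
      (fun _ => (∏ i, Adet (α i) (m i)) * ψ (Matrix.trace (∑ i, m i)))]
    simp
  · simp only [hC, false_and, if_neg, if_false, Finset.sum_const_zero, not_false_iff]

end Gather

section Triangular

variable {p q : Type} [Fintype p] [DecidableEq p] [Fintype q] [DecidableEq q]

lemma Adet_fromBlocks (aa : Fˣ →* ℂˣ) (A : Matrix p p F) (B : Matrix p q F)
    (D : Matrix q q F) :
    Adet aa (Matrix.fromBlocks A B 0 D) = Adet aa A * Adet aa D := by
  unfold Adet
  by_cases hA : IsUnit A.det <;> by_cases hD : IsUnit D.det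
  · have h : IsUnit (Matrix.fromBlocks A B 0 D).det := by
      rw [Matrix.det_fromBlocks_zero₂₁]; exact hA.mul hD
    rw [dif_pos h, dif_pos hA, dif_pos hD, ← Units.val_mul, ← _root_.map_mul]
    have heq : h.unit = hA.unit * hD.unit := by
      refine Units.ext ?_
      rw [h.unit_spec, Matrix.det_fromBlocks_zero₂₁, Units.val_mul, hA.unit_spec, hD.unit_spec]
    rw [heq]
  · have hnd : ¬ IsUnit (Matrix.fromBlocks A B 0 D).det := by
      rw [Matrix.det_fromBlocks_zero₂₁]
      exact fun hc => hD (IsUnit.mul_iff.mp hc).2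
    rw [dif_neg hnd, dif_neg hD, mul_zero]
  · have hnd : ¬ IsUnit (Matrix.fromBlocks A B 0 D).det := by
      rw [Matrix.det_fromBlocks_zero₂₁]
      exact fun hc => hA (IsUnit.mul_iff.mp hc).1
    rw [dif_neg hnd, dif_neg hA, zero_mul]
  · have hnd : ¬ IsUnit (Matrix.fromBlocks A B 0 D).det := by
      rw [Matrix.det_fromBlocks_zero₂₁]
      exact fun hc => hA (IsUnit.mul_iff.mp hc).1
    rw [dif_neg hnd, dif_neg hA, zero_mul]

lemma prod_triangular : ∀ {k : ℕ} (a : Fin k → Matrix p p F) (bb : Fin k → Matrix p q F)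
    (d : Fin k → Matrix q q F),
    ∃ J : Matrix p q F,
      (List.ofFn (fun i => Matrix.fromBlocks (a i) (bb i) 0 (d i))).prod
        = Matrix.fromBlocks ((List.ofFn a).prod) J 0 ((List.ofFn d).prod) := by
  intro k
  induction k with
  | zero =>
    intro a bb d
    refine ⟨0, ?_⟩
    have e1 : (List.ofFn (fun i : Fin 0 => Matrix.fromBlocks (a i) (bb i) 0 (d i))) = [] := rfl
    have e2 : (List.ofFn a) = [] := rfl
    have e3 : (List.ofFn d) = [] := rfl
    rw [e1, e2, e3]
    simp only [List.prod_nil]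
    rw [Matrix.fromBlocks_one]
  | succ n ih =>
    intro a bb d
    obtain ⟨J, hJ⟩ := ih (fun i => a i.succ) (fun i => bb i.succ) (fun i => d i.succ)
    refine ⟨a 0 * J + bb 0 * (List.ofFn fun i : Fin n => d i.succ).prod, ?_⟩
    rw [List.ofFn_succ, List.prod_cons, List.ofFn_succ (f := a), List.prod_cons,
      List.ofFn_succ (f := d), List.prod_cons, hJ, Matrix.fromBlocks_multiply]
    simp

lemma trace_sum_fromBlocks {k : ℕ} (a : Fin k → Matrix p p F) (bb : Fin k → Matrix p q F)
    (d : Fin k → Matrix q q F) :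
    Matrix.trace (∑ i, Matrix.fromBlocks (a i) (bb i) 0 (d i))
      = Matrix.trace (∑ i, a i) + Matrix.trace (∑ i, d i) := by
  rw [Matrix.trace_sum, Matrix.trace_sum, Matrix.trace_sum, ← Finset.sum_add_distrib]
  exact Finset.sum_congr rfl fun i _ => trace_fromBlocks' _ _ _ _

/-- Parametrization of matrices over a sum type by their four blocks. -/
def blocksEquiv {k : ℕ} :
    ((Fin k → Matrix p p F) × (Fin k → Matrix p q F) × (Fin k → Matrix q p F)
      × (Fin k → Matrix q q F)) ≃ (Fin k → Matrix (p ⊕ q) (p ⊕ q) F) where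
  toFun t := fun i => Matrix.fromBlocks (t.1 i) (t.2.1 i) (t.2.2.1 i) (t.2.2.2 i)
  invFun m := (fun i => (m i).toBlocks₁₁, fun i => (m i).toBlocks₁₂,
    fun i => (m i).toBlocks₂₁, fun i => (m i).toBlocks₂₂)
  left_inv := by
    rintro ⟨a, bb, c, d⟩
    simp only [Matrix.toBlocks_fromBlocks₁₁, Matrix.toBlocks_fromBlocks₁₂,
      Matrix.toBlocks_fromBlocks₂₁, Matrix.toBlocks_fromBlocks₂₂]
  right_inv := fun m => funext fun i => Matrix.fromBlocks_toBlocks (m i)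

variable {k : ℕ} (α : Fin k → Fˣ →* ℂˣ) (ψ : AddChar F ℂ)
variable (y₁ : Matrix p p F) (y₂ : Matrix q q F)

lemma triangular_factor :
    (∑ m : Fin k → Matrix (p ⊕ q) (p ⊕ q) F,
      if (Cnd y₁ y₂ ((List.ofFn m).prod) ∧ ∀ i, (m i).toBlocks₂₁ = 0) then
        (∏ i, Adet (α i) (m i)) * ψ (Matrix.trace (∑ i, m i))
      else 0)
    = ((Fintype.card F : ℂ) ^ (Fintype.card p * Fintype.card q)) ^ k
        * KS α ψ y₁ * KS α ψ y₂ := by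
  classical
  rw [← Equiv.sum_comp (blocksEquiv (F := F) (p := p) (q := q) (k := k))]
  rw [Fintype.sum_prod_type]
  simp only [Fintype.sum_prod_type]
  have hsummand : ∀ (a : Fin k → Matrix p p F) (bb : Fin k → Matrix p q F)
      (c : Fin k → Matrix q p F) (d : Fin k → Matrix q q F),
      (if (Cnd y₁ y₂ ((List.ofFn (blocksEquiv (a, bb, c, d))).prod)
          ∧ ∀ i, ((blocksEquiv (a, bb, c, d) : Fin k → Matrix (p ⊕ q) (p ⊕ q) F) i).toBlocks₂₁
            = 0) then
        (∏ i, Adet (α i) ((blocksEquiv (a, bb, c, d) : Fin k → Matrix (p ⊕ q) (p ⊕ q) F) i))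
          * ψ (Matrix.trace (∑ i,
              (blocksEquiv (a, bb, c, d) : Fin k → Matrix (p ⊕ q) (p ⊕ q) F) i))
      else 0)
      = if c = 0 then
          (if (List.ofFn a).prod = y₁ then (∏ i, Adet (α i) (a i))
            * ψ (Matrix.trace (∑ i, a i)) else 0)
          * (if (List.ofFn d).prod = y₂ then (∏ i, Adet (α i) (d i))
            * ψ (Matrix.trace (∑ i, d i)) else 0)
        else 0 := by
    intro a bb c d
    by_cases hc : c = 0
    · subst hc
      rw [if_pos rfl]
      obtain ⟨J, hJ⟩ := prod_triangular a bb d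
      have hshow : (blocksEquiv ((a, bb, (0 : Fin k → Matrix q p F), d))
          : Fin k → Matrix (p ⊕ q) (p ⊕ q) F)
          = fun i => Matrix.fromBlocks (a i) (bb i) 0 (d i) := rfl
      have hall : ∀ i, ((blocksEquiv ((a, bb, (0 : Fin k → Matrix q p F), d))
          : Fin k → Matrix (p ⊕ q) (p ⊕ q) F) i).toBlocks₂₁ = 0 := fun i => rfl
      have h1 : (∏ i, Adet (α i)
          ((blocksEquiv ((a, bb, (0 : Fin k → Matrix q p F), d))
            : Fin k → Matrix (p ⊕ q) (p ⊕ q) F) i))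
          = (∏ i, Adet (α i) (a i)) * (∏ i, Adet (α i) (d i)) := by
        rw [← Finset.prod_mul_distrib]
        exact Finset.prod_congr rfl fun i _ => Adet_fromBlocks (α i) (a i) (bb i) (d i)
      have h2 : Matrix.trace (∑ i,
          (blocksEquiv ((a, bb, (0 : Fin k → Matrix q p F), d))
            : Fin k → Matrix (p ⊕ q) (p ⊕ q) F) i)
          = Matrix.trace (∑ i, a i) + Matrix.trace (∑ i, d i) :=
        trace_sum_fromBlocks a bb d
      by_cases hy1 : (List.ofFn a).prod = y₁ <;> by_cases hy2 : (List.ofFn d).prod = y₂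
      · have hCnd : Cnd y₁ y₂
            ((List.ofFn ((blocksEquiv ((a, bb, (0 : Fin k → Matrix q p F), d)))
              : Fin k → Matrix (p ⊕ q) (p ⊕ q) F)).prod) := by
          rw [hshow, hJ]
          exact ⟨by simp [hy1], by simp, by simp [hy2]⟩
        rw [if_pos ⟨hCnd, hall⟩, if_pos hy1, if_pos hy2, h1, h2, AddChar.map_add_eq_mul]
        ring
      · rw [if_neg, if_neg hy2, mul_zero]
        rintro ⟨hCnd, -⟩
        rw [hshow, hJ] at hCnd
        exact hy2 (by simpa using hCnd.2.2)
      · rw [if_neg, if_neg hy1, zero_mul]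
        rintro ⟨hCnd, -⟩
        rw [hshow, hJ] at hCnd
        exact hy1 (by simpa using hCnd.1)
      · rw [if_neg, if_neg hy1, zero_mul]
        rintro ⟨hCnd, -⟩
        rw [hshow, hJ] at hCnd
        exact hy1 (by simpa using hCnd.1)
    · rw [if_neg hc, if_neg]
      rintro ⟨-, hall⟩
      exact hc (funext fun i => hall i)
  simp only [hsummand]
  have hcsum : ∀ (X : ℂ), (∑ c : Fin k → Matrix q p F, if c = 0 then X else 0) = X := by
    intro X
    rw [Finset.sum_ite_eq' Finset.univ (0 : Fin k → Matrix q p F) (fun _ => X)]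
    simp
  have hstep1 : ∀ (a : Fin k → Matrix p p F),
      (∑ c : Fin k → Matrix q p F, ∑ d : Fin k → Matrix q q F,
        if c = 0 then
          (if (List.ofFn a).prod = y₁ then (∏ i, Adet (α i) (a i))
            * ψ (Matrix.trace (∑ i, a i)) else 0)
          * (if (List.ofFn d).prod = y₂ then (∏ i, Adet (α i) (d i))
            * ψ (Matrix.trace (∑ i, d i)) else 0)
        else 0)
      = (if (List.ofFn a).prod = y₁ then (∏ i, Adet (α i) (a i))
          * ψ (Matrix.trace (∑ i, a i)) else 0) * KS α ψ y₂ := by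
    intro a
    have : ∀ c : Fin k → Matrix q p F, (∑ d : Fin k → Matrix q q F,
        if c = 0 then
          (if (List.ofFn a).prod = y₁ then (∏ i, Adet (α i) (a i))
            * ψ (Matrix.trace (∑ i, a i)) else 0)
          * (if (List.ofFn d).prod = y₂ then (∏ i, Adet (α i) (d i))
            * ψ (Matrix.trace (∑ i, d i)) else 0)
        else 0)
        = if c = 0 then
          (if (List.ofFn a).prod = y₁ then (∏ i, Adet (α i) (a i))
            * ψ (Matrix.trace (∑ i, a i)) else 0) * KS α ψ y₂ else 0 := by
      intro c
      by_cases hc : c = 0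
      · simp only [hc, if_true, eq_self_iff_true]
        rw [← Finset.mul_sum, KS]
      · simp only [hc, if_false, Finset.sum_const_zero]
    rw [Finset.sum_congr rfl (fun c _ => this c), hcsum]
  rw [Finset.sum_congr rfl (fun a _ => Finset.sum_congr rfl
    (fun bb _ => hstep1 _))]
  have hbsum : ∀ (X : ℂ), (∑ _bb : Fin k → Matrix p q F, X)
      = ((Fintype.card F : ℂ) ^ (Fintype.card p * Fintype.card q)) ^ k * X := by
    intro X
    have hcard : Fintype.card (Matrix p q F)
        = Fintype.card F ^ (Fintype.card p * Fintype.card q) := by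
      rw [Fintype.card_congr (Matrix.of (m := p) (n := q) (α := F)).symm, Fintype.card_fun,
        Fintype.card_fun, ← pow_mul, mul_comm (Fintype.card q)]
    rw [Finset.sum_const, Finset.card_univ, nsmul_eq_mul, Fintype.card_fun, Fintype.card_fin,
      hcard]
    push_cast
    ring
  rw [Finset.sum_congr rfl (fun a _ => hbsum _)]
  rw [← Finset.mul_sum, ← Finset.sum_mul, ← KS]
  ring

end Triangular

section Averaging

variable {p q : Type} [Fintype p] [DecidableEq p] [Fintype q] [DecidableEq q]

/-- `C` extended to `Fin (k+1)`, indexed so that `extCast C i.castSucc = C i`. -/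
def extCast {k : ℕ} {Z : Type} [Zero Z] (C : Fin k → Z) : Fin (k + 1) → Z :=
  Fin.lastCases 0 C

/-- `C` extended to `Fin (k+1)`, indexed so that `extSucc C i.succ = C i`. -/
def extSucc {k : ℕ} {Z : Type} [Zero Z] (C : Fin k → Z) : Fin (k + 1) → Z :=
  Fin.cases 0 C

lemma extCast_castSucc {k : ℕ} {Z : Type} [Zero Z] (C : Fin k → Z) (i : Fin k) :
    extCast C i.castSucc = C i := by
  simp [extCast]

lemma extCast_last {k : ℕ} {Z : Type} [Zero Z] (C : Fin k → Z) :
    extCast C (Fin.last k) = 0 := by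
  simp [extCast]

lemma extSucc_zero {k : ℕ} {Z : Type} [Zero Z] (C : Fin k → Z) :
    extSucc C 0 = 0 := by
  simp [extSucc]

lemma extSucc_succ {k : ℕ} {Z : Type} [Zero Z] (C : Fin k → Z) (i : Fin k) :
    extSucc C i.succ = C i := by
  simp [extSucc]

lemma ext_zero_iff {k : ℕ} {Z : Type} [AddGroup Z] (C : Fin k → Z) :
    (∀ j, extCast C j - extSucc C j = 0) ↔ (∀ i, C i = 0) := by
  constructor
  · intro h
    have main : ∀ nn : ℕ, ∀ hn : nn < k, C ⟨nn, hn⟩ = 0 := by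
      intro nn
      induction nn with
      | zero =>
        intro hn
        have h0 := h ((⟨0, hn⟩ : Fin k).castSucc)
        rw [extCast_castSucc] at h0
        have hz : (⟨0, hn⟩ : Fin k).castSucc = (0 : Fin (k + 1)) := Fin.ext (by simp)
        rw [hz, extSucc_zero, sub_zero] at h0
        exact h0
      | succ nn ih =>
        intro hn
        have hlt : nn < k := by omega
        have h0 := h ((⟨nn + 1, hn⟩ : Fin k).castSucc)
        rw [extCast_castSucc] at h0
        have hz : (⟨nn + 1, hn⟩ : Fin k).castSucc = (⟨nn, hlt⟩ : Fin k).succ :=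
          Fin.ext (by simp)
        rw [hz, extSucc_succ, ih hlt, sub_zero] at h0
        exact h0
    intro i
    have := main i.val i.isLt
    simpa using this
  · intro h j
    have h1 : extCast C j = 0 := by
      induction j using Fin.lastCases with
      | last => exact extCast_last C
      | cast i => rw [extCast_castSucc]; exact h i
    have h2 : extSucc C j = 0 := by
      induction j using Fin.cases with
      | zero => exact extSucc_zero C
      | succ i => rw [extSucc_succ]; exact h i
    rw [h1, h2, sub_zero]

lemma linform {k : ℕ} (b : Fin (k + 1) → Matrix p q F) (C : Fin k → Matrix q p F) :
    ∑ j, Matrix.trace (b j * (extCast C j - extSucc C j))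
      = (∑ i, Matrix.trace (b i.castSucc * C i)) - (∑ i, Matrix.trace (C i * b i.succ)) := by
  have h1 : ∑ j, Matrix.trace (b j * extCast C j)
      = ∑ i, Matrix.trace (b i.castSucc * C i) := by
    rw [Fin.sum_univ_castSucc]
    simp [extCast_castSucc, extCast_last]
  have h2 : ∑ j, Matrix.trace (b j * extSucc C j)
      = ∑ i, Matrix.trace (C i * b i.succ) := by
    rw [Fin.sum_univ_succ]
    simp only [extSucc_zero, extSucc_succ, Matrix.mul_zero, Matrix.trace_zero, zero_add]
    exact Finset.sum_congr rfl fun i _ => Matrix.trace_mul_comm _ _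
  calc ∑ j, Matrix.trace (b j * (extCast C j - extSucc C j))
      = ∑ j, (Matrix.trace (b j * extCast C j) - Matrix.trace (b j * extSucc C j)) := by
        refine Finset.sum_congr rfl fun j _ => ?_
        rw [Matrix.mul_sub, Matrix.trace_sub]
    _ = _ := by rw [Finset.sum_sub_distrib, h1, h2]

variable {k : ℕ} (α : Fin k → Fˣ →* ℂˣ) {ψ : AddChar F ℂ}
variable (y₁ : Matrix p p F) (y₂ : Matrix q q F)

lemma averaging (hψ : ψ.IsPrimitive) :
    (∑ m : Fin k → Matrix (p ⊕ q) (p ⊕ q) F,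
      if Cnd y₁ y₂ ((List.ofFn m).prod) then
        (∏ i, Adet (α i) (m i)) * ψ (Matrix.trace (∑ i, m i))
      else 0)
    = ∑ m : Fin k → Matrix (p ⊕ q) (p ⊕ q) F,
      if (Cnd y₁ y₂ ((List.ofFn m).prod) ∧ ∀ i, (m i).toBlocks₂₁ = 0) then
        (∏ i, Adet (α i) (m i)) * ψ (Matrix.trace (∑ i, m i))
      else 0 := by
  classical
  set Q : ℂ := (Fintype.card F : ℂ) ^ (Fintype.card p * Fintype.card q) with hQdef
  have hQ0 : Q ≠ 0 :=
    pow_ne_zero _ (Nat.cast_ne_zero.mpr Fintype.card_ne_zero)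
  have hact : ∀ bb : Fin (k + 1) → Matrix p q F,
      Function.Bijective (fun (m : Fin k → Matrix (p ⊕ q) (p ⊕ q) F) =>
        (fun i => up (bb i.castSucc) * m i * up (-(bb i.succ)))) := by
    intro bb
    rw [Function.bijective_iff_has_inverse]
    refine ⟨fun m i => up (-(bb i.castSucc)) * m i * up (bb i.succ),
      fun m => funext fun i => ?_, fun m => funext fun i => ?_⟩
    · show up (-(bb i.castSucc)) * (up (bb i.castSucc) * m i * up (-(bb i.succ)))
        * up (bb i.succ) = m i
      simp only [Matrix.mul_assoc]
      rw [up_neg_mul, Matrix.mul_one, ← Matrix.mul_assoc, up_neg_mul, Matrix.one_mul]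
    · show up (bb i.castSucc) * (up (-(bb i.castSucc)) * m i * up (bb i.succ))
        * up (-(bb i.succ)) = m i
      simp only [Matrix.mul_assoc]
      rw [up_mul_neg, Matrix.mul_one, ← Matrix.mul_assoc, up_mul_neg, Matrix.one_mul]
  have key : ∀ m : Fin k → Matrix (p ⊕ q) (p ⊕ q) F,
      (∑ bb : Fin (k + 1) → Matrix p q F,
        (if Cnd y₁ y₂ ((List.ofFn
            (fun i => up (bb i.castSucc) * m i * up (-(bb i.succ)))).prod) then
          (∏ i, Adet (α i) (up (bb i.castSucc) * m i * up (-(bb i.succ))))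
            * ψ (Matrix.trace (∑ i, up (bb i.castSucc) * m i * up (-(bb i.succ))))
        else 0))
      = Q ^ (k + 1) * (if (Cnd y₁ y₂ ((List.ofFn m).prod)
            ∧ ∀ i, (m i).toBlocks₂₁ = 0) then
          (∏ i, Adet (α i) (m i)) * ψ (Matrix.trace (∑ i, m i)) else 0) := by
    intro m
    have hCndiff : ∀ bb : Fin (k + 1) → Matrix p q F,
        Cnd y₁ y₂ ((List.ofFn
          (fun i => up (bb i.castSucc) * m i * up (-(bb i.succ)))).prod)
        ↔ Cnd y₁ y₂ ((List.ofFn m).prod) := by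
      intro bb
      rw [prod_ofFn_conj m (fun j => up (bb j)) (fun j => up (-(bb j)))
        (fun j => up_mul_neg _) (fun j => up_neg_mul _)]
      rw [Cnd_up_right, Cnd_up_left]
    by_cases hC : Cnd y₁ y₂ ((List.ofFn m).prod)
    · have hAdet : ∀ (bb : Fin (k + 1) → Matrix p q F) (i : Fin k),
          Adet (α i) (up (bb i.castSucc) * m i * up (-(bb i.succ))) = Adet (α i) (m i) := by
        intro bb i
        refine Adet_eq_of_det_eq _ ?_
        rw [Matrix.det_mul, Matrix.det_mul, det_up, det_up, one_mul, mul_one]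
      have htr : ∀ bb : Fin (k + 1) → Matrix p q F,
          Matrix.trace (∑ i, up (bb i.castSucc) * m i * up (-(bb i.succ)))
          = Matrix.trace (∑ i, m i)
            + ∑ j, Matrix.trace (bb j * (extCast (fun i => (m i).toBlocks₂₁) j
                - extSucc (fun i => (m i).toBlocks₂₁) j)) := by
        intro bb
        have e1 : ∀ i, Matrix.trace (up (bb i.castSucc) * m i * up (-(bb i.succ)))
            = Matrix.trace (m i) + (Matrix.trace (bb i.castSucc * (m i).toBlocks₂₁)
              - Matrix.trace ((m i).toBlocks₂₁ * bb i.succ)) := by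
          intro i
          rw [trace_up_conj, Matrix.mul_neg, Matrix.trace_neg]
          ring
        rw [Matrix.trace_sum, Finset.sum_congr rfl (fun i _ => e1 i),
          Finset.sum_add_distrib, Finset.sum_sub_distrib, ← Matrix.trace_sum, linform]
      have hsum : (∑ bb : Fin (k + 1) → Matrix p q F,
          (if Cnd y₁ y₂ ((List.ofFn
              (fun i => up (bb i.castSucc) * m i * up (-(bb i.succ)))).prod) then
            (∏ i, Adet (α i) (up (bb i.castSucc) * m i * up (-(bb i.succ))))
              * ψ (Matrix.trace (∑ i, up (bb i.castSucc) * m i * up (-(bb i.succ))))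
          else 0))
          = (∏ i, Adet (α i) (m i)) * ψ (Matrix.trace (∑ i, m i))
            * ∑ bb : Fin (k + 1) → Matrix p q F,
                ∏ j, ψ (Matrix.trace (bb j * (extCast (fun i => (m i).toBlocks₂₁) j
                  - extSucc (fun i => (m i).toBlocks₂₁) j))) := by
        rw [Finset.mul_sum]
        refine Finset.sum_congr rfl fun bb _ => ?_
        rw [if_pos ((hCndiff bb).mpr hC)]
        rw [Finset.prod_congr rfl (fun i _ => hAdet bb i), htr bb,
          AddChar.map_add_eq_mul, AddChar.map_finset_sum']
        ring
      rw [hsum]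
      have hpsi : ∑ bb : Fin (k + 1) → Matrix p q F,
          ∏ j, ψ (Matrix.trace (bb j * (extCast (fun i => (m i).toBlocks₂₁) j
            - extSucc (fun i => (m i).toBlocks₂₁) j)))
          = if (∀ i, (m i).toBlocks₂₁ = 0) then Q ^ (k + 1) else 0 := by
        rw [sum_fn_prod (fun j (β : Matrix p q F) =>
          ψ (Matrix.trace (β * (extCast (fun i => (m i).toBlocks₂₁) j
            - extSucc (fun i => (m i).toBlocks₂₁) j))))]
        rw [Finset.prod_congr rfl (fun j _ => sum_psi_trace_mul hψ _)]
        rw [prod_ite_all (fun j => (extCast (fun i => (m i).toBlocks₂₁) j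
          - extSucc (fun i => (m i).toBlocks₂₁) j) = 0) Q]
        rw [Fintype.card_fin]
        by_cases hz : ∀ i, (m i).toBlocks₂₁ = 0
        · rw [if_pos ((ext_zero_iff _).mpr hz), if_pos hz]
        · rw [if_neg (fun hcon => hz ((ext_zero_iff _).mp hcon)), if_neg hz]
      rw [hpsi]
      by_cases hall : ∀ i, (m i).toBlocks₂₁ = 0
      · rw [if_pos hall, if_pos ⟨hC, hall⟩]
        ring
      · rw [if_neg hall, if_neg (fun hcon => hall hcon.2)]
        ring
    · rw [if_neg (fun hcon => hC hcon.1), mul_zero]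
      refine Finset.sum_eq_zero fun bb _ => ?_
      rw [if_neg (fun hcon => hC ((hCndiff bb).mp hcon))]
  have hcard : (Fintype.card (Fin (k + 1) → Matrix p q F) : ℂ) = Q ^ (k + 1) := by
    have hcard1 : Fintype.card (Matrix p q F)
        = Fintype.card F ^ (Fintype.card p * Fintype.card q) := by
      rw [Fintype.card_congr (Matrix.of (m := p) (n := q) (α := F)).symm, Fintype.card_fun,
        Fintype.card_fun, ← pow_mul, mul_comm (Fintype.card q)]
    rw [Fintype.card_fun, Fintype.card_fin, hcard1, hQdef]
    push_cast
    ring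
  have main : Q ^ (k + 1) * (∑ m : Fin k → Matrix (p ⊕ q) (p ⊕ q) F,
      if Cnd y₁ y₂ ((List.ofFn m).prod) then
        (∏ i, Adet (α i) (m i)) * ψ (Matrix.trace (∑ i, m i))
      else 0)
      = Q ^ (k + 1) * (∑ m : Fin k → Matrix (p ⊕ q) (p ⊕ q) F,
      if (Cnd y₁ y₂ ((List.ofFn m).prod) ∧ ∀ i, (m i).toBlocks₂₁ = 0) then
        (∏ i, Adet (α i) (m i)) * ψ (Matrix.trace (∑ i, m i))
      else 0) := by
    calc Q ^ (k + 1) * (∑ m : Fin k → Matrix (p ⊕ q) (p ⊕ q) F,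
        if Cnd y₁ y₂ ((List.ofFn m).prod) then
          (∏ i, Adet (α i) (m i)) * ψ (Matrix.trace (∑ i, m i))
        else 0)
        = ∑ _bb : Fin (k + 1) → Matrix p q F,
            (∑ m : Fin k → Matrix (p ⊕ q) (p ⊕ q) F,
              if Cnd y₁ y₂ ((List.ofFn m).prod) then
                (∏ i, Adet (α i) (m i)) * ψ (Matrix.trace (∑ i, m i))
              else 0) := by
          rw [Finset.sum_const, Finset.card_univ, nsmul_eq_mul, hcard]
      _ = ∑ bb : Fin (k + 1) → Matrix p q F,
            (∑ m : Fin k → Matrix (p ⊕ q) (p ⊕ q) F,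
              if Cnd y₁ y₂ ((List.ofFn
                  (fun i => up (bb i.castSucc) * m i * up (-(bb i.succ)))).prod) then
                (∏ i, Adet (α i) (up (bb i.castSucc) * m i * up (-(bb i.succ))))
                  * ψ (Matrix.trace (∑ i, up (bb i.castSucc) * m i * up (-(bb i.succ))))
              else 0) := by
          refine Finset.sum_congr rfl fun bb _ => ?_
          exact (Fintype.sum_bijective _ (hact bb) _ _ (fun m => rfl)).symm
      _ = ∑ m : Fin k → Matrix (p ⊕ q) (p ⊕ q) F,
            (∑ bb : Fin (k + 1) → Matrix p q F,
              if Cnd y₁ y₂ ((List.ofFn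
                  (fun i => up (bb i.castSucc) * m i * up (-(bb i.succ)))).prod) then
                (∏ i, Adet (α i) (up (bb i.castSucc) * m i * up (-(bb i.succ))))
                  * ψ (Matrix.trace (∑ i, up (bb i.castSucc) * m i * up (-(bb i.succ))))
              else 0) := Finset.sum_comm
      _ = ∑ m : Fin k → Matrix (p ⊕ q) (p ⊕ q) F,
            Q ^ (k + 1) * (if (Cnd y₁ y₂ ((List.ofFn m).prod)
                ∧ ∀ i, (m i).toBlocks₂₁ = 0) then
              (∏ i, Adet (α i) (m i)) * ψ (Matrix.trace (∑ i, m i)) else 0) :=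
          Finset.sum_congr rfl fun m _ => key m
      _ = Q ^ (k + 1) * (∑ m : Fin k → Matrix (p ⊕ q) (p ⊕ q) F,
            if (Cnd y₁ y₂ ((List.ofFn m).prod) ∧ ∀ i, (m i).toBlocks₂₁ = 0) then
              (∏ i, Adet (α i) (m i)) * ψ (Matrix.trace (∑ i, m i)) else 0) := by
          rw [Finset.mul_sum]
  exact mul_left_cancel₀ (pow_ne_zero _ hQ0) main

end Averaging

section Assemble

variable {p q : Type} [Fintype p] [DecidableEq p] [Fintype q] [DecidableEq q]
variable {k : ℕ} (α : Fin k → Fˣ →* ℂˣ) (ψ : AddChar F ℂ)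

lemma sumB (x₁ : Matrix p p F) (x₂ : Matrix q q F)
    (hcop : IsCoprime (Matrix.charpoly x₁) (Matrix.charpoly x₂)) :
    ∑ B : Matrix p q F, KS α ψ (Matrix.fromBlocks x₁ B 0 x₂)
      = (Fintype.card F : ℂ) ^ (Fintype.card p * Fintype.card q)
        * KS α ψ (Matrix.fromBlocks x₁ 0 0 x₂) := by
  classical
  have hbij := sylvester_bijective hcop
  rw [← Equiv.sum_comp (Equiv.ofBijective _ hbij)
    (fun B => KS α ψ (Matrix.fromBlocks x₁ B 0 x₂))]
  have hterm : ∀ b : Matrix p q F,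
      KS α ψ (Matrix.fromBlocks x₁ (b * x₂ - x₁ * b) 0 x₂)
        = KS α ψ (Matrix.fromBlocks x₁ 0 0 x₂) := by
    intro b
    have hU : up b * Matrix.fromBlocks x₁ 0 0 x₂ * up (-b)
        = Matrix.fromBlocks x₁ (b * x₂ - x₁ * b) 0 x₂ := by
      rw [up, up, Matrix.fromBlocks_multiply, Matrix.fromBlocks_multiply]
      congr 1 <;> simp <;> abel
    set U : (Matrix (p ⊕ q) (p ⊕ q) F)ˣ := ⟨up b, up (-b), up_mul_neg b, up_neg_mul b⟩
      with hUdef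
    have hc := KS_conj α ψ U (Matrix.fromBlocks x₁ 0 0 x₂)
    rw [show ((U⁻¹ : (Matrix (p ⊕ q) (p ⊕ q) F)ˣ) : Matrix (p ⊕ q) (p ⊕ q) F)
      = up (-b) from rfl, show (U : Matrix (p ⊕ q) (p ⊕ q) F) = up b from rfl, hU] at hc
    exact hc
  simp only [Equiv.ofBijective_apply]
  rw [Finset.sum_congr rfl (fun b _ => hterm b)]
  have hcard1 : Fintype.card (Matrix p q F)
      = Fintype.card F ^ (Fintype.card p * Fintype.card q) := by
    rw [Fintype.card_congr (Matrix.of (m := p) (n := q) (α := F)).symm, Fintype.card_fun,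
      Fintype.card_fun, ← pow_mul, mul_comm (Fintype.card q)]
  rw [Finset.sum_const, Finset.card_univ, nsmul_eq_mul, hcard1]
  push_cast
  ring

lemma KS_mult (hψ : ψ.IsPrimitive) (x₁ : Matrix p p F) (x₂ : Matrix q q F)
    (hcop : IsCoprime (Matrix.charpoly x₁) (Matrix.charpoly x₂)) :
    (Fintype.card F : ℂ) ^ (Fintype.card p * Fintype.card q)
      * KS α ψ (Matrix.fromBlocks x₁ 0 0 x₂)
    = ((Fintype.card F : ℂ) ^ (Fintype.card p * Fintype.card q)) ^ k
        * KS α ψ x₁ * KS α ψ x₂ := by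
  rw [← sumB α ψ x₁ x₂ hcop, gather α ψ x₁ x₂, averaging α x₁ x₂ hψ,
    triangular_factor α ψ x₁ x₂]

end Assemble

end MKHelp

open MKHelp in
/-- multiplicativity. If `x₁ ∈ GL_{n₁}(F)` and `x₂ ∈ GL_{n₂}(F)` have coprime
characteristic polynomials (no common eigenvalues over an algebraic closure), then
`K(α,ψ,diag(x₁,x₂)) = q^((k-1)n₁n₂) K(α,ψ,x₁) K(α,ψ,x₂)`. -/
theorem matrix_kloosterman_multiplicativity
    {F : Type} [Field F] [Fintype F] [DecidableEq F]
    (ψ : AddChar F ℂ) (hψ : ∃ a : F, ψ a ≠ 1)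
    {k : ℕ} (hk : 1 ≤ k) (α : Fin k → Fˣ →* ℂˣ)
    {n n₁ n₂ : ℕ} (hn : n = n₁ + n₂)
    (x₁ : (Matrix (Fin n₁) (Fin n₁) F)ˣ) (x₂ : (Matrix (Fin n₂) (Fin n₂) F)ˣ)
    (hcop : IsCoprime (Matrix.charpoly (x₁ : Matrix (Fin n₁) (Fin n₁) F))
      (Matrix.charpoly (x₂ : Matrix (Fin n₂) (Fin n₂) F))) :
    matrixKloosterman α ψ
      (Matrix.fromBlocks (x₁ : Matrix (Fin n₁) (Fin n₁) F) 0 0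
        (x₂ : Matrix (Fin n₂) (Fin n₂) F))
    = (Fintype.card F : ℂ) ^ ((k - 1) * n₁ * n₂) *
        matrixKloosterman α ψ (x₁ : Matrix (Fin n₁) (Fin n₁) F) *
        matrixKloosterman α ψ (x₂ : Matrix (Fin n₂) (Fin n₂) F) := by
  classical
  have hprim : ψ.IsPrimitive := by
    refine AddChar.IsPrimitive.of_ne_one ?_
    intro h1
    obtain ⟨a, ha⟩ := hψ
    exact ha (by rw [h1]; rfl)
  have hu1 : IsUnit ((x₁ : Matrix (Fin n₁) (Fin n₁) F)) := x₁.isUnit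
  have hu2 : IsUnit ((x₂ : Matrix (Fin n₂) (Fin n₂) F)) := x₂.isUnit
  have hud : IsUnit (Matrix.fromBlocks (x₁ : Matrix (Fin n₁) (Fin n₁) F) 0 0
      (x₂ : Matrix (Fin n₂) (Fin n₂) F)) := by
    rw [Matrix.isUnit_iff_isUnit_det, Matrix.det_fromBlocks_zero₂₁]
    exact ((Matrix.isUnit_iff_isUnit_det _).mp hu1).mul
      ((Matrix.isUnit_iff_isUnit_det _).mp hu2)
  have hmain := KS_mult α ψ hprim (x₁ : Matrix (Fin n₁) (Fin n₁) F)
    (x₂ : Matrix (Fin n₂) (Fin n₂) F) hcop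
  rw [KS_eq α ψ hud, KS_eq α ψ hu1, KS_eq α ψ hu2] at hmain
  set Q : ℂ := (Fintype.card F : ℂ) ^ (Fintype.card (Fin n₁) * Fintype.card (Fin n₂))
    with hQdef
  have hQ0 : Q ≠ 0 := pow_ne_zero _ (Nat.cast_ne_zero.mpr Fintype.card_ne_zero)
  have hpow : Q ^ k = Q * Q ^ (k - 1) := by
    conv_lhs => rw [show k = (k - 1) + 1 from (Nat.succ_pred_eq_of_pos hk).symm]
    rw [pow_succ]
    ring
  have hQpow : Q ^ (k - 1) = (Fintype.card F : ℂ) ^ ((k - 1) * n₁ * n₂) := by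
    rw [hQdef, Fintype.card_fin, Fintype.card_fin, ← pow_mul]
    congr 1
    ring
  have : Q * matrixKloosterman α ψ
      (Matrix.fromBlocks (x₁ : Matrix (Fin n₁) (Fin n₁) F) 0 0
        (x₂ : Matrix (Fin n₂) (Fin n₂) F))
      = Q * ((Fintype.card F : ℂ) ^ ((k - 1) * n₁ * n₂) *
        matrixKloosterman α ψ (x₁ : Matrix (Fin n₁) (Fin n₁) F) *
        matrixKloosterman α ψ (x₂ : Matrix (Fin n₂) (Fin n₂) F)) := by
    rw [hmain, hpow, hQpow]
    ring
  exact mul_left_cancel₀ hQ0 this
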